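/- Let p be an odd prime, n a positive integer, q = pⁿ with q ≡ 1 (mod 4), and K a finite field with q² elements with F its subfield of order q. Let α be a nonsquare in F and ξ ∈ K with ξ² = α, so every x ∈ K is uniquely x = x₀ + x₁ξ with x₀, x₁ ∈ F. Let i, k be integers with 0 < i < n, 0 ≤ k < n, and n/gcd(n,k) odd, and define f : K → K by f(x₀ + x₁ξ) = (x₀^{p^k+1} + α x₁^{(p^k+1)p^i}) + 2x₀x₁ξ (the planar function of a Dickson semifield when k = 0, and of a Pott–Zhou semifield when k > 0). Then for all a, b ∈ K the number of x ∈ K with f(x+a) − b ∈ ξF equals 1 if b ∈ ξF and equals q+1 if b ∉ ξF; hence U_ξ = {(x, tξ) : x ∈ K, t ∈ F} ∪ {(∞)} is a unital in the commutative semifield plane Π(f). -/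

import Mathlib

/-!
Write `x = u + vξ` with `u, v ∈ F` and put `m = p^k + 1`. Then `f x - b ∈ ξF` iff
`u^m + α v^(m p^i) = b₀`, where `b₀` is the `F`-coordinate of `b`. Since `gcd(m, q - 1) = 2`, the
maps `u ↦ u^m` and `u ↦ u²` on `F` have fibres of equal size, so `u^m = e(u)²` for a permutation
`e` of `F`. As `v ↦ v^(p^i)` is an automorphism of `F` and `-1 = δ²` in `F` (because `q ≡ 1 mod 4`),
the substitution `(u, v) ↦ e(u) + δ e(v^(p^i)) ξ` turns `u^m + α v^(m p^i)` into the norm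
`N(y) = y^(q+1) = (u + vξ)(u - vξ) = u² - αv²` of `K/F`. The norm maps onto `F` with fibres of size
`q + 1` over `Fˣ`, which gives the counts `1` and `q + 1`; the other lines are counted directly.
-/

/-- The point set of the shift plane `Π(f)`: affine points `(x,y)`, points at
infinity `(a)` for `a ∈ K`, and the point `(∞)`. -/
abbrev ShiftPt (K : Type) : Type := (K × K) ⊕ (K ⊕ Unit)

/-- The affine line `L_{a,b} = {(x, f(x+a) − b) : x ∈ K} ∪ {(a)}` of the shift plane. -/
def affLine (K : Type) [Field K] (f : K → K) (a b : K) : Set (ShiftPt K) :=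
  {P | (∃ x : K, P = Sum.inl (x, f (x + a) - b)) ∨ P = Sum.inr (Sum.inl a)}

/-- The vertical line `N_a = {(a,y) : y ∈ K} ∪ {(∞)}` of the shift plane. -/
def vertLine (K : Type) [Field K] (a : K) : Set (ShiftPt K) :=
  {P | (∃ y : K, P = Sum.inl (a, y)) ∨ P = Sum.inr (Sum.inr ())}

/-- The line at infinity of the shift plane. -/
def lineAtInf (K : Type) : Set (ShiftPt K) :=
  {P | ∃ s : K ⊕ Unit, P = Sum.inr s}

/-- The set of all lines of the shift plane `Π(f)`. -/
def shiftLines (K : Type) [Field K] (f : K → K) : Set (Set (ShiftPt K)) :=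
  {L | (∃ a b : K, L = affLine K f a b) ∨ (∃ a : K, L = vertLine K a) ∨ L = lineAtInf K}

/-- The set `θF = {tθ : t ∈ F}`, where `F = {t : t^q = t}` is the subfield of order `q`. -/
def scalarSet (K : Type) [Field K] (q : ℕ) (θ : K) : Set K :=
  {c | ∃ t : K, t ^ q = t ∧ c = t * θ}

/-- The point set `U_θ = {(x, tθ) : x ∈ K, t ∈ F} ∪ {(∞)}`. -/
def unitalSet (K : Type) [Field K] (q : ℕ) (θ : K) : Set (ShiftPt K) :=
  {P | (∃ x t : K, t ^ q = t ∧ P = Sum.inl (x, t * θ)) ∨ P = Sum.inr (Sum.inr ())}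

theorem Nat.gcd_two_mul_of_odd_div_gcd {k n : ℕ} (h : Odd (n / n.gcd k)) :
    (2 * k).gcd n = k.gcd n := by
  have hd : 0 < n.gcd k := Nat.pos_of_ne_zero fun h0 => by simp [h0] at h
  have hcop : (k / n.gcd k).Coprime (n / n.gcd k) := (Nat.coprime_div_gcd_div_gcd hd).symm
  calc (2 * k).gcd n = (n.gcd k * (2 * (k / n.gcd k))).gcd (n.gcd k * (n / n.gcd k)) := by
        rw [mul_left_comm, Nat.mul_div_cancel' (Nat.gcd_dvd_right n k),
          Nat.mul_div_cancel' (Nat.gcd_dvd_left n k)]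
    _ = k.gcd n := by
        rw [Nat.gcd_mul_left, Nat.Coprime.gcd_mul_left_cancel _ (Nat.coprime_two_left.mpr h), hcop,
          mul_one, Nat.gcd_comm]

theorem Nat.gcd_pow_add_one_pow_sub_one {p k n : ℕ} (hp : Odd p) (h : Odd (n / n.gcd k)) :
    (p ^ k + 1).gcd (p ^ n - 1) = 2 := by
  have hpk := (hp.pow (n := k)).pos
  have h2 : 2 ∣ (p ^ k + 1).gcd (p ^ n - 1) :=
    Nat.dvd_gcd (hp.pow.add_one).two_dvd (Nat.Odd.sub_odd hp.pow odd_one).two_dvd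
  have hsq : p ^ k + 1 ∣ p ^ (2 * k) - 1 :=
    ⟨p ^ k - 1, by rw [mul_comm 2 k, pow_mul, ← one_pow 2, Nat.sq_sub_sq, one_pow]⟩
  have hk : (p ^ k + 1).gcd (p ^ n - 1) ∣ p ^ k - 1 := by
    have := Nat.dvd_gcd ((Nat.gcd_dvd_left _ _).trans hsq) (Nat.gcd_dvd_right _ (p ^ n - 1))
    rw [Nat.pow_sub_one_gcd_pow_sub_one, Nat.gcd_two_mul_of_odd_div_gcd h] at this
    exact this.trans (Nat.pow_sub_one_dvd_pow_sub_one p (Nat.gcd_dvd_left k n))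
  refine Nat.dvd_antisymm ?_ h2
  simpa [show p ^ k + 1 - (p ^ k - 1) = 2 by omega] using Nat.dvd_sub (Nat.gcd_dvd_left _ _) hk

theorem Nat.sq_sub_one_eq (q : ℕ) : q ^ 2 - 1 = (q - 1) * (q + 1) := by
  rw [← one_pow 2, Nat.sq_sub_sq, one_pow, mul_comm]

theorem Equiv.ncard_preimage {α β : Type*} (e : α ≃ β) (s : Set β) : (e ⁻¹' s).ncard = s.ncard :=
  Set.ncard_preimage_of_injective_subset_range e.injective (by simp)

theorem Finite.exists_equiv_comp_eq_of_ncard_fiber_eq {α β γ : Type*} [Finite α] [Finite β]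
    {g : α → γ} {g' : β → γ} (h : ∀ c, {a | g a = c}.ncard = {b | g' b = c}.ncard) :
    ∃ e : α ≃ β, ∀ a, g' (e a) = g a := by
  have fiber (c : γ) : {a // g a = c} ≃ {b // g' b = c} :=
    (Finite.card_eq.mp (by rw [← Set.coe_ofPred, ← Set.coe_ofPred, Nat.card_coe_set_eq,
      Nat.card_coe_set_eq, h])).some
  refine ⟨(Equiv.sigmaFiberEquiv g).symm.trans
    ((Equiv.sigmaCongrRight fiber).trans (Equiv.sigmaFiberEquiv g')), fun a => ?_⟩
  exact (fiber (g a) ⟨a, rfl⟩).2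

section PowerMaps

variable {L : Type*} [Field L]

theorem ncard_pow_eq_pow {d : ℕ} {w : L} (hw : w ≠ 0) :
    {x : L | x ^ d = w ^ d}.ncard = {x : L | x ^ d = 1}.ncard := by
  have : {x : L | x ^ d = w ^ d} = (w * ·) '' {x : L | x ^ d = 1} := by
    ext x
    refine ⟨fun hx => ⟨x / w, ?_, mul_div_cancel₀ x hw⟩, ?_⟩
    · rw [Set.mem_ofPred_eq, div_pow, hx, div_self (pow_ne_zero d hw)]
    · rintro ⟨y, hy, rfl⟩
      rw [Set.mem_ofPred_eq, mul_pow, hy, mul_one]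
  rw [this, Set.ncard_image_of_injective _ (mul_right_injective₀ hw)]

theorem exists_pow_eq_pow_gcd (d : ℕ) {w : L} (hw : w ≠ 0) :
    ∃ x : L, x ^ d = w ^ d.gcd (Nat.card L - 1) := by
  have hN : w ^ (Nat.card L - 1) = 1 := by
    simpa [Nat.card_units] using congrArg Units.val (pow_card_eq_one' (x := Units.mk0 w hw))
  refine ⟨w ^ d.gcdA (Nat.card L - 1), ?_⟩
  rw [← zpow_natCast, ← zpow_natCast, ← zpow_mul, Nat.gcd_eq_gcd_ab, zpow_add₀ hw,
    zpow_mul w _ (d.gcdB _), zpow_natCast w (Nat.card L - 1), hN, one_zpow, mul_one, mul_comm]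

variable [Finite L]

theorem ncard_pow_eq_one {d : ℕ} (hd : d ≠ 0) :
    {x : L | x ^ d = 1}.ncard = (Nat.card L - 1).gcd d := by
  have : {x : L | x ^ d = 1} = Units.val '' ((powMonoidHom d : Lˣ →* Lˣ).ker : Set Lˣ) := by
    ext x
    refine ⟨fun hx => ⟨Units.mk0 x ?_, Units.ext hx, rfl⟩, ?_⟩
    · rintro rfl; simp [zero_pow hd] at hx
    · rintro ⟨u, hu, rfl⟩
      exact congrArg Units.val hu
  rw [this, Set.ncard_image_of_injective _ Units.val_injective, ← Nat.card_coe_set_eq,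
    SetLike.coe_sort_coe, IsCyclic.card_powMonoidHom_ker, Nat.card_units]

theorem ncard_pow_eq_eq_ncard_pow_gcd_eq {d : ℕ} (hd : d ≠ 0) (c : L) :
    {x : L | x ^ d = c}.ncard = {x : L | x ^ d.gcd (Nat.card L - 1) = c}.ncard := by
  have hg : d.gcd (Nat.card L - 1) ≠ 0 := by simp [hd]
  rcases eq_or_ne c 0 with rfl | hc
  · simp [pow_eq_zero_iff hd, pow_eq_zero_iff hg]
  by_cases hroot : ∃ w : L, w ^ d.gcd (Nat.card L - 1) = c
  · obtain ⟨w, rfl⟩ := hroot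
    have hw : w ≠ 0 := by rintro rfl; exact hc (zero_pow hg)
    obtain ⟨x, hx⟩ := exists_pow_eq_pow_gcd d hw
    have hx0 : x ≠ 0 := by rintro rfl; exact hc (by rw [← hx, zero_pow hd])
    rw [← hx, ncard_pow_eq_pow hx0, hx, ncard_pow_eq_pow hw, ncard_pow_eq_one hd,
      ncard_pow_eq_one hg, Nat.gcd_comm d, Nat.gcd_gcd_self_right_left]
  · have hroot' : ¬ ∃ x : L, x ^ d = c := fun ⟨x, hx⟩ => hroot
      ⟨x ^ (d / d.gcd (Nat.card L - 1)), by
        rw [← pow_mul, Nat.div_mul_cancel (Nat.gcd_dvd_left _ _), hx]⟩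
    push Not at hroot hroot'
    simp [hroot, hroot']

theorem exists_equiv_sq_eq_pow {d : ℕ} (hd : d ≠ 0) (hd2 : d.gcd (Nat.card L - 1) = 2) :
    ∃ e : L ≃ L, ∀ x, e x ^ 2 = x ^ d :=
  Finite.exists_equiv_comp_eq_of_ncard_fiber_eq (g' := (· ^ 2)) fun c => by
    rw [ncard_pow_eq_eq_ncard_pow_gcd_eq hd c, hd2]

end PowerMaps

section Coordinates

variable {K : Type*} [Field K] {F : Subfield K} {ξ : K}

theorem Subfield.add_mul_injective (hξ : ξ ∉ F) :
    Function.Injective fun uv : F × F => (uv.1 : K) + uv.2 * ξ := by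
  rintro ⟨u, v⟩ ⟨u', v'⟩ h
  simp only at h
  by_cases hv : v = v'
  · subst hv
    exact Prod.ext (Subtype.ext (add_right_cancel h)) rfl
  · refine absurd ?_ hξ
    have hv' : (v' : K) - v ≠ 0 := sub_ne_zero.mpr (by exact_mod_cast Ne.symm hv)
    have : ξ = ((u : K) - u') / (v' - v) := by
      rw [eq_div_iff hv']
      linear_combination -h
    rw [this]
    exact F.div_mem (F.sub_mem u.2 u'.2) (F.sub_mem v'.2 v.2)

variable [Finite K]

noncomputable def Subfield.coordEquiv (hξ : ξ ∉ F) (hK : Nat.card K = Nat.card F ^ 2) :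
    F × F ≃ K :=
  Equiv.ofBijective _ ((Subfield.add_mul_injective hξ).bijective_of_nat_card_le
    (by rw [Nat.card_prod, hK, sq]))

@[simp]
theorem Subfield.coordEquiv_apply (hξ : ξ ∉ F) (hK : Nat.card K = Nat.card F ^ 2) (uv : F × F) :
    Subfield.coordEquiv hξ hK uv = uv.1 + uv.2 * ξ := rfl

end Coordinates

theorem one_lt_of_nat_card_eq_sq {K : Type*} [Field K] [Finite K] {q : ℕ}
    (hK : Nat.card K = q ^ 2) : 1 < q := by
  by_contra! h
  exact (hK ▸ Finite.one_lt_card (α := K)).not_ge (pow_le_one₀ (Nat.zero_le _) h)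

section FixedSubfield

variable (K : Type*) [Field K] (p : ℕ) [ExpChar K p] (n : ℕ)

def fixedSubfield : Subfield K := (iterateFrobenius K p n).eqLocusField (RingHom.id K)

variable {K p n}

theorem mem_fixedSubfield {x : K} : x ∈ fixedSubfield K p n ↔ x ^ p ^ n = x := by
  rw [fixedSubfield, RingHom.mem_eqLocusField, iterateFrobenius_def, RingHom.id_apply]

theorem nat_card_fixedSubfield [Finite K] (hK : Nat.card K = (p ^ n) ^ 2) :
    Nat.card (fixedSubfield K p n) = p ^ n := by
  have hq := one_lt_of_nat_card_eq_sq hK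
  have hset : (fixedSubfield K p n : Set K) = insert 0 {x : K | x ^ (p ^ n - 1) = 1} := by
    ext x
    rw [SetLike.mem_coe, mem_fixedSubfield, Set.mem_insert_iff, Set.mem_ofPred_eq]
    rcases eq_or_ne x 0 with rfl | hx
    · simp [zero_pow (by omega : p ^ n ≠ 0)]
    · rw [or_iff_right hx]
      conv_rhs => rw [← mul_left_inj' hx, one_mul, ← pow_succ, Nat.sub_add_cancel hq.le]
  rw [← SetLike.coe_sort_coe, Nat.card_coe_set_eq, hset,
    Set.ncard_insert_of_notMem (by simp [zero_pow (by omega : p ^ n - 1 ≠ 0)]),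
    ncard_pow_eq_one (by omega), hK, Nat.sq_sub_one_eq, Nat.gcd_eq_right (dvd_mul_right _ _)]
  omega

theorem exists_pow_add_one_eq [Finite K] (hK : Nat.card K = (p ^ n) ^ 2) {c : K}
    (hc : c ∈ fixedSubfield K p n) : ∃ y : K, y ^ (p ^ n + 1) = c := by
  obtain ⟨y, hy⟩ := FiniteField.norm_surjective (fixedSubfield K p n) K ⟨c, hc⟩
  have hq : 0 < p ^ n - 1 := Nat.sub_pos_of_lt (one_lt_of_nat_card_eq_sq hK)
  refine ⟨y, ?_⟩
  have := FiniteField.algebraMap_norm_eq_pow (K := fixedSubfield K p n) (x := y)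
  rwa [hy, nat_card_fixedSubfield hK, hK, Nat.sq_sub_one_eq, Nat.mul_div_cancel_left _ hq,
    eq_comm] at this

theorem ncard_pow_add_one_eq [Finite K] (hK : Nat.card K = (p ^ n) ^ 2) {c : K}
    (hc : c ∈ fixedSubfield K p n) (hc0 : c ≠ 0) :
    {y : K | y ^ (p ^ n + 1) = c}.ncard = p ^ n + 1 := by
  obtain ⟨y, rfl⟩ := exists_pow_add_one_eq hK hc
  have hy : y ≠ 0 := by rintro rfl; simp at hc0
  rw [ncard_pow_eq_pow hy, ncard_pow_eq_one (by omega), hK, Nat.sq_sub_one_eq,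
    Nat.gcd_eq_right (dvd_mul_left _ _)]

theorem pow_eq_neg_of_sq_mem_fixedSubfield {ξ : K} (hξ : ξ ∉ fixedSubfield K p n)
    (hξ2 : ξ ^ 2 ∈ fixedSubfield K p n) : ξ ^ p ^ n = -ξ := by
  rw [mem_fixedSubfield] at hξ hξ2
  have : (ξ ^ p ^ n - ξ) * (ξ ^ p ^ n + ξ) = 0 := by
    linear_combination (by rw [← pow_mul, mul_comm, pow_mul, hξ2] : (ξ ^ p ^ n) ^ 2 = ξ ^ 2)
  exact eq_neg_of_add_eq_zero_left ((mul_eq_zero.mp this).resolve_left (sub_ne_zero.mpr hξ))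

theorem add_mul_pow_add_one {ξ u v : K} (hξ : ξ ^ p ^ n = -ξ) (hu : u ∈ fixedSubfield K p n)
    (hv : v ∈ fixedSubfield K p n) : (u + v * ξ) ^ (p ^ n + 1) = u ^ 2 - ξ ^ 2 * v ^ 2 := by
  rw [mem_fixedSubfield] at hu hv
  rw [pow_succ, add_pow_expChar_pow, mul_pow, hu, hv, hξ]
  ring

theorem exists_equiv_pow_add_one_eq [Finite K] (hK : Nat.card K = (p ^ n) ^ 2)
    (hq4 : p ^ n % 4 ≠ 3) {ξ : K} (hξ : ξ ∉ fixedSubfield K p n) (hξ2 : ξ ^ 2 ∈ fixedSubfield K p n)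
    {m : ℕ} (hm : m ≠ 0) (hmq : m.gcd (p ^ n - 1) = 2) (i : ℕ) :
    ∃ τ : fixedSubfield K p n × fixedSubfield K p n ≃ K, ∀ u v : fixedSubfield K p n,
      τ (u, v) ^ (p ^ n + 1) = (u : K) ^ m + ξ ^ 2 * (v : K) ^ (m * p ^ i) := by
  have hF := nat_card_fixedSubfield hK
  have : Fintype (fixedSubfield K p n) := Fintype.ofFinite _
  obtain ⟨e, he⟩ := exists_equiv_sq_eq_pow (L := fixedSubfield K p n) hm (by rw [hF, hmq])
  obtain ⟨δ, hδ⟩ : IsSquare (-1 : fixedSubfield K p n) :=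
    FiniteField.isSquare_neg_one_iff.mpr (by rwa [← Nat.card_eq_fintype_card, hF])
  have hδ0 : δ ≠ 0 := by rintro rfl; simp at hδ
  -- `τ (u, v) = e u + δ e (v ^ p ^ i) ξ`
  refine ⟨(Equiv.prodCongr e ((iterateFrobeniusEquiv _ p i).toEquiv.trans
    (e.trans (Equiv.mulLeft₀ δ hδ0)))).trans (Subfield.coordEquiv hξ (by rw [hK, hF])),
    fun u v => ?_⟩
  have hu : (e u : K) ^ 2 = (u : K) ^ m := by exact_mod_cast he u
  have hv : (e (iterateFrobeniusEquiv _ p i v) : K) ^ 2 = (v : K) ^ (m * p ^ i) := by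
    rw [mul_comm, pow_mul]
    exact_mod_cast he _
  have hδK : (δ : K) * δ = -1 := by exact_mod_cast hδ.symm
  simp only [Equiv.trans_apply, Equiv.prodCongr_apply, Prod.map, Subfield.coordEquiv_apply,
    RingEquiv.toEquiv_eq_coe, EquivLike.coe_coe, Equiv.mulLeft₀_apply, Subfield.coe_mul]
  rw [add_mul_pow_add_one (pow_eq_neg_of_sq_mem_fixedSubfield hξ hξ2) (e u).2
    (mul_mem δ.2 (e _).2)]
  linear_combination hu - ξ ^ 2 * (δ : K) ^ 2 * hv - ξ ^ 2 * (v : K) ^ (m * p ^ i) * hδK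

end FixedSubfield

section Unital

variable {K : Type} [Field K] {p n : ℕ} [ExpChar K p]

theorem add_mul_mem_scalarSet_iff {ξ u v : K} (hξ : ξ ∉ fixedSubfield K p n)
    (hu : u ∈ fixedSubfield K p n) (hv : v ∈ fixedSubfield K p n) :
    u + v * ξ ∈ scalarSet K (p ^ n) ξ ↔ u = 0 := by
  refine ⟨fun ⟨t, ht, h⟩ => ?_, fun hu0 => ⟨v, mem_fixedSubfield.mp hv, by rw [hu0, zero_add]⟩⟩
  have := Subfield.add_mul_injective hξ (a₁ := (⟨u, hu⟩, ⟨v, hv⟩))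
    (a₂ := (0, ⟨t, mem_fixedSubfield.mpr ht⟩)) (by simpa using h)
  simpa using congrArg (fun uv => (uv.1 : K)) this

theorem sub_mem_scalarSet_iff {ξ A B b₀ b₁ : K} (hξ : ξ ∉ fixedSubfield K p n)
    (hA : A ∈ fixedSubfield K p n) (hB : B ∈ fixedSubfield K p n)
    (hb₀ : b₀ ∈ fixedSubfield K p n) (hb₁ : b₁ ∈ fixedSubfield K p n) :
    A + B * ξ - (b₀ + b₁ * ξ) ∈ scalarSet K (p ^ n) ξ ↔ A = b₀ := by
  rw [show A + B * ξ - (b₀ + b₁ * ξ) = A - b₀ + (B - b₁) * ξ by ring,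
    add_mul_mem_scalarSet_iff hξ (sub_mem hA hb₀) (sub_mem hB hb₁), sub_eq_zero]

theorem ncard_sub_mem_scalarSet_eq [Finite K] (hK : Nat.card K = (p ^ n) ^ 2)
    (hq4 : p ^ n % 4 ≠ 3) {ξ : K} (hξ : ξ ∉ fixedSubfield K p n)
    (hξ2 : ξ ^ 2 ∈ fixedSubfield K p n) {m : ℕ} (hm : m ≠ 0) (hmq : m.gcd (p ^ n - 1) = 2)
    {i : ℕ} {f : K → K} (hf : ∀ x0 x1 : K, x0 ^ p ^ n = x0 → x1 ^ p ^ n = x1 →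
      f (x0 + x1 * ξ) = (x0 ^ m + ξ ^ 2 * x1 ^ (m * p ^ i)) + 2 * x0 * x1 * ξ)
    (a : K) {b₀ b₁ : K} (hb₀ : b₀ ∈ fixedSubfield K p n) (hb₁ : b₁ ∈ fixedSubfield K p n) :
    {x : K | f (x + a) - (b₀ + b₁ * ξ) ∈ scalarSet K (p ^ n) ξ}.ncard =
      {y : K | y ^ (p ^ n + 1) = b₀}.ncard := by
  set F := fixedSubfield K p n
  obtain ⟨τ, hτ⟩ := exists_equiv_pow_add_one_eq hK hq4 hξ hξ2 hm hmq i
  let C := Subfield.coordEquiv hξ (F := F) (by rw [hK, nat_card_fixedSubfield hK])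
  have key : C ⁻¹' {y | f y - (b₀ + b₁ * ξ) ∈ scalarSet K (p ^ n) ξ} =
      τ ⁻¹' {y | y ^ (p ^ n + 1) = b₀} := by
    ext ⟨⟨u, hu⟩, ⟨v, hv⟩⟩
    have hA : u ^ m + ξ ^ 2 * v ^ (m * p ^ i) ∈ F :=
      add_mem (pow_mem hu _) (mul_mem hξ2 (pow_mem hv _))
    have hB : 2 * u * v ∈ F := mul_mem (mul_mem (ofNat_mem F 2) hu) hv
    rw [Set.mem_preimage, Set.mem_preimage, Set.mem_ofPred_eq, Set.mem_ofPred_eq,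
      Subfield.coordEquiv_apply, hf u v (mem_fixedSubfield.mp hu) (mem_fixedSubfield.mp hv), hτ,
      sub_mem_scalarSet_iff hξ hA hB hb₀ hb₁]
  exact (Equiv.ncard_preimage (Equiv.addRight a) _).trans
    (by rw [← Equiv.ncard_preimage C, key, Equiv.ncard_preimage])

theorem ncard_sub_mem_scalarSet [Finite K] (hK : Nat.card K = (p ^ n) ^ 2)
    (hq4 : p ^ n % 4 ≠ 3) {ξ : K} (hξ : ξ ∉ fixedSubfield K p n)
    (hξ2 : ξ ^ 2 ∈ fixedSubfield K p n) {m : ℕ} (hm : m ≠ 0) (hmq : m.gcd (p ^ n - 1) = 2)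
    {i : ℕ} {f : K → K} (hf : ∀ x0 x1 : K, x0 ^ p ^ n = x0 → x1 ^ p ^ n = x1 →
      f (x0 + x1 * ξ) = (x0 ^ m + ξ ^ 2 * x1 ^ (m * p ^ i)) + 2 * x0 * x1 * ξ) (a b : K) :
    (b ∈ scalarSet K (p ^ n) ξ → {x : K | f (x + a) - b ∈ scalarSet K (p ^ n) ξ}.ncard = 1) ∧
    (b ∉ scalarSet K (p ^ n) ξ →
      {x : K | f (x + a) - b ∈ scalarSet K (p ^ n) ξ}.ncard = p ^ n + 1) := by
  obtain ⟨⟨b₀, b₁⟩, rfl⟩ :=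
    (Subfield.coordEquiv hξ (by rw [hK, nat_card_fixedSubfield hK])).surjective b
  have hb : (b₀ : K) + b₁ * ξ ∈ scalarSet K (p ^ n) ξ ↔ b₀ = 0 := by
    rw [add_mul_mem_scalarSet_iff hξ b₀.2 b₁.2, ZeroMemClass.coe_eq_zero]
  rw [Subfield.coordEquiv_apply, hb,
    ncard_sub_mem_scalarSet_eq hK hq4 hξ hξ2 hm hmq hf a b₀.2 b₁.2]
  refine ⟨fun h => by simp [h], fun h => ?_⟩
  exact ncard_pow_add_one_eq hK b₀.2 (by exact_mod_cast h)

end Unital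

section ShiftPlane

variable {K : Type} [Field K] {q : ℕ} {θ : K}

theorem ncard_affLine_inter_unitalSet (f : K → K) (a b : K) :
    (affLine K f a b ∩ unitalSet K q θ).ncard =
      {x : K | f (x + a) - b ∈ scalarSet K q θ}.ncard := by
  have : affLine K f a b ∩ unitalSet K q θ =
      (fun x => Sum.inl (x, f (x + a) - b)) '' {x : K | f (x + a) - b ∈ scalarSet K q θ} := by
    ext P
    simp only [affLine, unitalSet, scalarSet, Set.mem_inter_iff, Set.mem_image, Set.mem_ofPred_eq]
    constructor
    · rintro ⟨⟨x, rfl⟩ | rfl, ⟨x', t, ht, h⟩ | h⟩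
      · exact ⟨x, ⟨t, ht, (Prod.mk.inj (Sum.inl_injective h)).2⟩, rfl⟩
      all_goals simp at h
    · rintro ⟨x, ⟨t, ht, h⟩, rfl⟩
      exact ⟨Or.inl ⟨x, rfl⟩, Or.inl ⟨x, t, ht, by rw [h]⟩⟩
  rw [this, Set.ncard_image_of_injective _ fun x y h => (Prod.mk.inj (Sum.inl_injective h)).1]

theorem ncard_vertLine_inter_unitalSet [Finite K] (hθ : θ ≠ 0) (a : K) :
    (vertLine K a ∩ unitalSet K q θ).ncard = {t : K | t ^ q = t}.ncard + 1 := by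
  have : vertLine K a ∩ unitalSet K q θ =
      insert (Sum.inr (Sum.inr ())) ((fun t => Sum.inl (a, t * θ)) '' {t : K | t ^ q = t}) := by
    ext P
    simp only [vertLine, unitalSet, Set.mem_inter_iff, Set.mem_insert_iff, Set.mem_image,
      Set.mem_ofPred_eq]
    constructor
    · rintro ⟨⟨y, rfl⟩ | rfl, ⟨x', t, ht, h⟩ | h⟩
      · exact Or.inr ⟨t, ht, by rw [(Prod.mk.inj (Sum.inl_injective h)).2]⟩
      · simp at h
      · simp at h
      · exact Or.inl rfl
    · rintro (rfl | ⟨t, ht, rfl⟩)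
      · exact ⟨Or.inr rfl, Or.inr rfl⟩
      · exact ⟨Or.inl ⟨t * θ, rfl⟩, Or.inl ⟨a, t, ht, rfl⟩⟩
  rw [this, Set.ncard_insert_of_notMem (by simp) (Set.toFinite _),
    Set.ncard_image_of_injective _ fun s t h => by simpa [hθ] using h]

theorem lineAtInf_inter_unitalSet : lineAtInf K ∩ unitalSet K q θ = {Sum.inr (Sum.inr ())} := by
  ext P
  simp only [lineAtInf, unitalSet, Set.mem_inter_iff, Set.mem_ofPred_eq, Set.mem_singleton_iff]
  constructor
  · rintro ⟨⟨s, rfl⟩, ⟨x, t, ht, h⟩ | h⟩ <;> simp_all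
  · rintro rfl
    exact ⟨⟨Sum.inr (), rfl⟩, Or.inr rfl⟩

end ShiftPlane

theorem stmt6_general (p n q : ℕ) (hp : Nat.Prime p) (hpodd : Odd p) (hq : q = p ^ n)
    (hq4 : q % 4 = 1)
    (K : Type) [Field K] [Fintype K] (hcard : Fintype.card K = q ^ 2)
    (α : K) (hαF : α ^ q = α) (hαns : ¬ ∃ s : K, s ^ q = s ∧ s ^ 2 = α)
    (ξ : K) (hξ : ξ ^ 2 = α)
    (i k : ℕ) (hkodd : Odd (n / Nat.gcd n k))
    (f : K → K)
    (hf : ∀ x0 x1 : K, x0 ^ q = x0 → x1 ^ q = x1 →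
      f (x0 + x1 * ξ) =
        (x0 ^ (p ^ k + 1) + α * x1 ^ ((p ^ k + 1) * p ^ i)) + 2 * x0 * x1 * ξ) :
    (∀ a b : K,
      (b ∈ scalarSet K q ξ → {x : K | f (x + a) - b ∈ scalarSet K q ξ}.ncard = 1) ∧
      (b ∉ scalarSet K q ξ → {x : K | f (x + a) - b ∈ scalarSet K q ξ}.ncard = q + 1)) ∧
    (∀ L ∈ shiftLines K f,
      (L ∩ unitalSet K q ξ).ncard = 1 ∨ (L ∩ unitalSet K q ξ).ncard = q + 1) := by
  subst hq hξ
  have : Fact p.Prime := ⟨hp⟩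
  have : CharP K p := charP_of_card_eq_prime_pow (hcard.trans (pow_mul p n 2).symm)
  have hK : Nat.card K = (p ^ n) ^ 2 := Nat.card_eq_fintype_card.trans hcard
  have hξF : ξ ∉ fixedSubfield K p n := fun h => hαns ⟨ξ, mem_fixedSubfield.mp h, rfl⟩
  have hcount := ncard_sub_mem_scalarSet hK (by omega) hξF (mem_fixedSubfield.mpr hαF) (by omega)
    (Nat.gcd_pow_add_one_pow_sub_one hpodd hkodd) hf
  refine ⟨hcount, ?_⟩
  rintro L (⟨a, b, rfl⟩ | ⟨a, rfl⟩ | rfl)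
  · rw [ncard_affLine_inter_unitalSet]
    by_cases hb : b ∈ scalarSet K (p ^ n) ξ
    exacts [Or.inl ((hcount a b).1 hb), Or.inr ((hcount a b).2 hb)]
  · right
    rw [ncard_vertLine_inter_unitalSet (fun h => hξF (by rw [h]; exact zero_mem _)),
      ← Nat.card_coe_set_eq]
    exact congrArg (· + 1) (nat_card_fixedSubfield hK)
  · left
    rw [lineAtInf_inter_unitalSet, Set.ncard_singleton]

/-- Theorem 2.5 (a),(b).  Let `q = pⁿ ≡ 1 (mod 4)`, `α` a nonsquare in
the subfield `F` of order `q`, `ξ² = α`, and `f(x₀ + x₁ξ) =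
(x₀^{p^k+1} + α x₁^{(p^k+1)p^i}) + 2x₀x₁ξ` with `0 < i < n`, `0 ≤ k < n` and
`n/gcd(n,k)` odd (Dickson for `k = 0`, Pott–Zhou for `k > 0`).  Then for all `a b`
the number of `x` with `f(x+a) − b ∈ ξF` is `1` if `b ∈ ξF` and `q+1` otherwise;
hence `U_ξ` is a unital in the commutative semifield plane `Π(f)`. -/
theorem stmt6 (p n q : ℕ) (hp : Nat.Prime p) (hpodd : Odd p) (hn : 0 < n) (hq : q = p ^ n)
    (hq4 : q % 4 = 1)
    (K : Type) [Field K] [Fintype K] (hcard : Fintype.card K = q ^ 2)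
    (α : K) (hαF : α ^ q = α) (hαns : ¬ ∃ s : K, s ^ q = s ∧ s ^ 2 = α)
    (ξ : K) (hξ : ξ ^ 2 = α)
    (i k : ℕ) (hi0 : 0 < i) (hin : i < n) (hkn : k < n) (hkodd : Odd (n / Nat.gcd n k))
    (f : K → K)
    (hf : ∀ x0 x1 : K, x0 ^ q = x0 → x1 ^ q = x1 →
      f (x0 + x1 * ξ) =
        (x0 ^ (p ^ k + 1) + α * x1 ^ ((p ^ k + 1) * p ^ i)) + 2 * x0 * x1 * ξ) :
    (∀ a b : K,
      (b ∈ scalarSet K q ξ → {x : K | f (x + a) - b ∈ scalarSet K q ξ}.ncard = 1) ∧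
      (b ∉ scalarSet K q ξ → {x : K | f (x + a) - b ∈ scalarSet K q ξ}.ncard = q + 1)) ∧
    (∀ L ∈ shiftLines K f,
      (L ∩ unitalSet K q ξ).ncard = 1 ∨ (L ∩ unitalSet K q ξ).ncard = q + 1) :=
  stmt6_general p n q hp hpodd hq hq4 K hcard α hαF hαns ξ hξ i k hkodd f hf
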